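/- For every integer t ≥ 2 there is a constant C_t > 0 such that every t-program P has at most C_t · α_t^n stable models, where n = |At(P)| and α_t is the largest real root of the equation x^t = x^{t−1} + x^{t−2} + ⋯ + x + 1. -/

import Mathlib

/-- A clause of a propositional logic program: an optional head (a definite
clause if `head = some h`, a constraint if `head = none`), a positive body
and a negative body. -/
structure LPClause (α : Type) where
  head : Option α
  pos : Finset α
  neg : Finset α
deriving DecidableEq

/-- A program is a finite set of clauses. -/
abbrev LPProgram (α : Type) := Finset (LPClause α)

/-- The atoms occurring in a clause. -/
def LPClause.atoms {α : Type} [DecidableEq α] (c : LPClause α) : Finset α :=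
  c.head.toFinset ∪ c.pos ∪ c.neg

/-- The atoms occurring in a program. -/
def LPProgram.atoms {α : Type} [DecidableEq α] (P : LPProgram α) : Finset α :=
  P.sup LPClause.atoms

/-- `N` is closed under the Horn rules of the reduct `P^M`: for every definite
clause of `P` whose negative body is disjoint from `M`, if its positive body
is contained in `N` then so is its head. -/
def ClosedUnder {α : Type} (P : LPProgram α) (M : Finset α) (N : Set α) : Prop :=
  ∀ c ∈ P, ∀ h : α, c.head = some h → (∀ b ∈ c.neg, b ∉ M) →
    (↑c.pos : Set α) ⊆ N → h ∈ N

/-- `M` is a stable model of `P`: `M` is the least set closed under the rules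
of the reduct `P^M` (i.e. `M = lm(P^M)`), and `M` satisfies every constraint
of `P`. -/
def IsStable {α : Type} (P : LPProgram α) (M : Finset α) : Prop :=
  ClosedUnder P M ↑M ∧ (∀ N : Set α, ClosedUnder P M N → ↑M ⊆ N) ∧
  ∀ c ∈ P, c.head = none → ¬(c.pos ⊆ M ∧ ∀ b ∈ c.neg, b ∉ M)

/-- `P` is a `t`-program: every clause has at most `t` literals, counting the head. -/
def IsTProgram {α : Type} (P : LPProgram α) (t : ℕ) : Prop :=
  ∀ c ∈ P, c.pos.card + c.neg.card + (c.head.elim 0 fun _ => 1) ≤ t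

-- ===== auxiliary =====

section Aux
variable {α : Type} [DecidableEq α]

lemma clause_atoms_subset {P : LPProgram α} {c : LPClause α} (hc : c ∈ P) :
    c.atoms ⊆ P.atoms := Finset.le_sup (f := LPClause.atoms) hc

lemma stable_subset_atoms {P : LPProgram α} {M : Finset α} (hM : IsStable P M) :
    M ⊆ P.atoms := by
  have h := hM.2.1 (↑P.atoms) (by
    intro c hc h hh _ _
    have : h ∈ c.atoms := by
      simp [LPClause.atoms, hh]
    exact_mod_cast clause_atoms_subset hc this)
  intro y hy; exact_mod_cast h (by exact_mod_cast hy)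

lemma support {P : LPProgram α} {M : Finset α} (hM : IsStable P M) {x : α} (hx : x ∈ M) :
    ∃ c ∈ P, c.head = some x ∧ c.pos ⊆ M ∧ (∀ b ∈ c.neg, b ∉ M) ∧ x ∉ c.pos := by
  by_contra hcon
  push_neg at hcon
  have hclosed : ClosedUnder P M (↑(M.erase x)) := by
    intro c hc h hh hneg hpos
    have hposM : c.pos ⊆ M := by
      intro b hb
      have : b ∈ (↑(M.erase x) : Set α) := hpos (by exact_mod_cast hb)
      exact Finset.mem_of_mem_erase (by exact_mod_cast this)
    have hxpos : x ∉ c.pos := by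
      intro hxc
      have : x ∈ (↑(M.erase x) : Set α) := hpos (by exact_mod_cast hxc)
      simp at this
    have hhx : h ≠ x := by
      intro he; subst he
      exact hxpos (hcon c hc hh hposM hneg)
    have : h ∈ M := hM.1 c hc h hh hneg (by
      intro b hb
      exact_mod_cast Finset.mem_of_mem_erase (show b ∈ M.erase x by exact_mod_cast hpos hb))
    exact_mod_cast Finset.mem_erase.2 ⟨hhx, this⟩
  have := hM.2.1 _ hclosed (show (x:α) ∈ (↑M : Set α) by exact_mod_cast hx)
  simp at this

open Classical in
noncomputable def SMF (P : LPProgram α) (T F : Finset α) : Finset (Finset α) :=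
  P.atoms.powerset.filter (fun M => IsStable P M ∧ T ⊆ M ∧ ∀ b ∈ F, b ∉ M)

lemma mem_SMF {P : LPProgram α} {T F M : Finset α} :
    M ∈ SMF P T F ↔ IsStable P M ∧ T ⊆ M ∧ ∀ b ∈ F, b ∉ M := by
  classical
  simp only [SMF, Finset.mem_filter, Finset.mem_powerset]
  constructor
  · rintro ⟨-, h⟩; exact h
  · intro h; exact ⟨stable_subset_atoms h.1, h⟩

end Aux

section ListHelp
variable {α : Type} [DecidableEq α]

def trueOf (l : List (α × Bool)) : Finset α := ((l.filter fun p => p.2).map Prod.fst).toFinset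
def falseOf (l : List (α × Bool)) : Finset α := ((l.filter fun p => !p.2).map Prod.fst).toFinset
def atomsOf (l : List (α × Bool)) : Finset α := (l.map Prod.fst).toFinset

lemma mem_trueOf {l : List (α × Bool)} {y : α} : y ∈ trueOf l ↔ (y, true) ∈ l := by
  simp only [trueOf, List.mem_toFinset, List.mem_map, List.mem_filter]
  constructor
  · rintro ⟨⟨y', b⟩, ⟨hm, hb⟩, rfl⟩
    simp at hb; subst hb; exact hm
  · intro h; exact ⟨(y, true), ⟨h, rfl⟩, rfl⟩

lemma mem_falseOf {l : List (α × Bool)} {y : α} : y ∈ falseOf l ↔ (y, false) ∈ l := by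
  simp only [falseOf, List.mem_toFinset, List.mem_map, List.mem_filter]
  constructor
  · rintro ⟨⟨y', b⟩, ⟨hm, hb⟩, rfl⟩
    simp at hb; subst hb; exact hm
  · intro h; exact ⟨(y, false), ⟨h, rfl⟩, rfl⟩

lemma mem_atomsOf {l : List (α × Bool)} {y : α} : y ∈ atomsOf l ↔ ∃ b, (y, b) ∈ l := by
  simp only [atomsOf, List.mem_toFinset, List.mem_map]
  constructor
  · rintro ⟨⟨y', b⟩, hm, rfl⟩; exact ⟨b, hm⟩
  · rintro ⟨b, hm⟩; exact ⟨(y, b), hm, rfl⟩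

lemma trueOf_union_falseOf (l : List (α × Bool)) : trueOf l ∪ falseOf l = atomsOf l := by
  ext y
  simp only [Finset.mem_union, mem_trueOf, mem_falseOf, mem_atomsOf]
  constructor
  · rintro (h | h); exacts [⟨true, h⟩, ⟨false, h⟩]
  · rintro ⟨b, h⟩; cases b; exacts [Or.inr h, Or.inl h]

lemma atomsOf_append (l₁ l₂ : List (α × Bool)) :
    atomsOf (l₁ ++ l₂) = atomsOf l₁ ∪ atomsOf l₂ := by
  simp [atomsOf, List.toFinset_append]

lemma atomsOf_card {l : List (α × Bool)} (h : (l.map Prod.fst).Nodup) :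
    (atomsOf l).card = l.length := by
  rw [atomsOf, List.toFinset_card_of_nodup h, List.length_map]

lemma atomsOf_take_subset (l : List (α × Bool)) (n : ℕ) :
    atomsOf (l.take n) ⊆ atomsOf l := by
  intro y hy
  rw [mem_atomsOf] at hy ⊢
  obtain ⟨b, hb⟩ := hy
  exact ⟨b, (l.take_sublist n).mem hb⟩

lemma mem_take_exists_getD {l : List (α × Bool)} {p : α × Bool} {j : ℕ} (d : α × Bool)
    (h : p ∈ l.take j) : ∃ i, i < j ∧ i < l.length ∧ l.getD i d = p := by
  obtain ⟨i, hi, hget⟩ := List.mem_iff_getElem.1 h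
  have hlen : i < l.length := lt_of_lt_of_le hi (by simp [List.length_take])
  have hij : i < j := lt_of_lt_of_le hi (by simp [List.length_take])
  refine ⟨i, hij, hlen, ?_⟩
  rw [List.getD_eq_getElem l d hlen, ← hget, List.getElem_take]

end ListHelp

-- analytic lemmas
lemma rootA (t : ℕ) (ht : 2 ≤ t) (a : ℝ)
    (ha_root : a ^ t = ∑ i ∈ Finset.range t, a ^ i)
    (ha_max : ∀ x : ℝ, x ^ t = ∑ i ∈ Finset.range t, x ^ i → x ≤ a) : 1 < a := by
  set g : ℝ → ℝ := fun x => x ^ t - ∑ i ∈ Finset.range t, x ^ i with hg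
  have hcont : ContinuousOn g (Set.Icc (1:ℝ) 2) := by
    apply Continuous.continuousOn
    apply Continuous.sub (continuous_pow t)
    exact continuous_finset_sum _ (fun i _ => continuous_pow i)
  have h1 : g 1 < 0 := by
    simp only [hg, one_pow, Finset.sum_const, Finset.card_range, nsmul_eq_mul, mul_one]
    have : (2:ℝ) ≤ (t:ℝ) := by exact_mod_cast ht
    linarith
  have h2 : g 2 > 0 := by
    have : ∑ i ∈ Finset.range t, (2:ℝ) ^ i = 2 ^ t - 1 := by
      have := geom_sum_eq (by norm_num : (2:ℝ) ≠ 1) t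
      rw [this]; ring
    simp only [hg, this]; linarith
  obtain ⟨r, hr, hgr⟩ := intermediate_value_Icc (by norm_num : (1:ℝ) ≤ 2) hcont
    (show (0:ℝ) ∈ Set.Icc (g 1) (g 2) from ⟨h1.le, h2.le⟩)
  have hroot : r ^ t = ∑ i ∈ Finset.range t, r ^ i := by
    have : r ^ t - ∑ i ∈ Finset.range t, r ^ i = 0 := hgr
    linarith
  have := ha_max r hroot
  have hr1 : r ≠ 1 := by
    intro h; rw [h] at hgr; exact absurd hgr (ne_of_lt h1)
  have : 1 < r := lt_of_le_of_ne hr.1 (Ne.symm hr1)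
  linarith [ha_max r hroot]

lemma rootB (t : ℕ) (a : ℝ) (ha : 1 < a)
    (ha_root : a ^ t = ∑ i ∈ Finset.range t, a ^ i) :
    ∀ n ≤ t, ∑ i ∈ Finset.range n, a ^ i ≤ a ^ n := by
  have ha0 : 0 < a := by linarith
  suffices h : ∀ d n, n + d = t → ∑ i ∈ Finset.range n, a ^ i ≤ a ^ n by
    intro n hn; exact h (t - n) n (by omega)
  intro d
  induction d with
  | zero => intro n hn; simp at hn; subst hn; exact le_of_eq ha_root.symm
  | succ d ihd =>
    intro n hn
    have IH := ihd (n+1) (by omega)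
    have hsum : ∑ i ∈ Finset.range (n+1), a ^ i = (∑ i ∈ Finset.range n, a ^ (i+1)) + 1 := by
      rw [Finset.sum_range_succ']; simp
    have hmul : ∑ i ∈ Finset.range n, a ^ (i+1) = a * ∑ i ∈ Finset.range n, a ^ i := by
      rw [Finset.mul_sum]; apply Finset.sum_congr rfl; intro i _; ring
    have : a * ∑ i ∈ Finset.range n, a ^ i ≤ a * a ^ n := by
      have : a * ∑ i ∈ Finset.range n, a ^ i + 1 ≤ a ^ (n+1) := by
        rw [← hmul, ← hsum]; exact IH
      have h2 : a ^ (n+1) = a * a ^ n := by ring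
      linarith
    exact le_of_mul_le_mul_left this ha0

lemma rootC (t : ℕ) (a : ℝ) (ha : 1 < a)
    (ha_root : a ^ t = ∑ i ∈ Finset.range t, a ^ i) :
    ∀ n k : ℕ, 1 ≤ k → k ≤ t → k ≤ n → ∑ i ∈ Finset.range k, a ^ (n - k + i) ≤ a ^ n := by
  intro n k _ hkt hkn
  have ha0 : (0:ℝ) ≤ a ^ (n - k) := pow_nonneg (by linarith) _
  have : ∑ i ∈ Finset.range k, a ^ (n - k + i) = a ^ (n-k) * ∑ i ∈ Finset.range k, a ^ i := by
    rw [Finset.mul_sum]; apply Finset.sum_congr rfl; intro i _; rw [pow_add]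
  rw [this]
  calc a ^ (n-k) * ∑ i ∈ Finset.range k, a ^ i ≤ a ^ (n-k) * a ^ k :=
        mul_le_mul_of_nonneg_left (rootB t a ha ha_root k hkt) ha0
    _ = a ^ n := by rw [← pow_add]; congr 1; omega

section Key
variable {α : Type} [DecidableEq α]

lemma key_step (t : ℕ) (a : ℝ) (ha : 1 < a)
    (hsum : ∀ n k : ℕ, 1 ≤ k → k ≤ t → k ≤ n → ∑ i ∈ Finset.range k, a ^ (n - k + i) ≤ a ^ n)
    (P : LPProgram α) (hP : IsTProgram P t) (f : ℕ) (T F : Finset α)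
    (hfree : (P.atoms \ (T ∪ F)).card ≤ f)
    (ih : ∀ m, m < f → ∀ T' F' : Finset α, (P.atoms \ (T' ∪ F')).card ≤ m →
      ((SMF P T' F').card : ℝ) ≤ a ^ m)
    (A B : Finset α) (hA : A ∈ SMF P T F) (hB : B ∈ SMF P T F)
    (x : α) (hxA : x ∈ A) (hxB : x ∉ B) :
    ((SMF P T F).card : ℝ) ≤ a ^ f := by
  classical
  obtain ⟨hAst, hTA, hFA⟩ := mem_SMF.1 hA
  obtain ⟨hBst, hTB, hFB⟩ := mem_SMF.1 hB
  obtain ⟨c, hc, hhead, hposA, hnegA, hxpos⟩ := support hAst hxA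
  have hxneg : x ∉ c.neg := fun h => hnegA x h hxA
  have hdisj : ∀ y, y ∈ c.pos → y ∉ c.neg := fun y hp hn => hnegA y hn (hposA hp)
  have hxTF : x ∉ T ∪ F := by
    intro h
    rcases Finset.mem_union.1 h with h | h
    · exact hxB (hTB h)
    · exact hFA x h hxA
  have hxat : x ∈ P.atoms := by
    apply clause_atoms_subset hc
    simp [LPClause.atoms, hhead]
  have hposfix : ∀ b ∈ c.pos, b ∈ T ∪ F → b ∈ T := by
    intro b hb h
    rcases Finset.mem_union.1 h with h | h
    · exact h
    · exact absurd (hposA hb) (hFA b h)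
  have hnegfix : ∀ b ∈ c.neg, b ∈ T ∪ F → b ∈ F := by
    intro b hb h
    rcases Finset.mem_union.1 h with h | h
    · exact absurd (hTA h) (hnegA b hb)
    · exact h
  -- the branching list
  set Bs : List α := (c.pos \ (T ∪ F)).toList with hBs
  set Ds : List α := (c.neg \ (T ∪ F)).toList with hDs
  have hBsmem : ∀ y, y ∈ Bs ↔ (y ∈ c.pos ∧ y ∉ T ∪ F) := by
    intro y; rw [hBs, Finset.mem_toList, Finset.mem_sdiff]
  have hDsmem : ∀ y, y ∈ Ds ↔ (y ∈ c.neg ∧ y ∉ T ∪ F) := by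
    intro y; rw [hDs, Finset.mem_toList, Finset.mem_sdiff]
  set pre : List (α × Bool) :=
    Bs.map (fun y => (y, true)) ++ Ds.map (fun y => (y, false)) with hpre
  set L : List (α × Bool) := pre ++ [(x, true)] with hL
  set k : ℕ := L.length with hk
  have hklen : k = Bs.length + Ds.length + 1 := by simp [hk, hL, hpre]; omega
  have hk1 : 1 ≤ k := by omega
  have hmapfst : L.map Prod.fst = (Bs ++ Ds) ++ [x] := by
    simp [hL, hpre, Function.comp_def]
  have hnodup : (L.map Prod.fst).Nodup := by
    rw [hmapfst]
    apply List.Nodup.append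
    · apply List.Nodup.append (Finset.nodup_toList _) (Finset.nodup_toList _)
      intro y hy hy'
      exact hdisj y ((hBsmem y).1 hy).1 ((hDsmem y).1 hy').1
    · exact List.nodup_singleton x
    · intro y hy hy'
      rcases List.mem_append.1 hy with h | h
      · rw [List.mem_singleton] at hy'; subst hy'; exact hxpos ((hBsmem y).1 h).1
      · rw [List.mem_singleton] at hy'; subst hy'; exact hxneg ((hDsmem y).1 h).1
  have hmemL : ∀ p, p ∈ L ↔ (p ∈ pre ∨ p = (x, true)) := by
    intro p; simp [hL]
  have hmempre : ∀ p : α × Bool, p ∈ pre ↔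
      ((p.1 ∈ c.pos ∧ p.1 ∉ T ∪ F ∧ p.2 = true) ∨ (p.1 ∈ c.neg ∧ p.1 ∉ T ∪ F ∧ p.2 = false)) := by
    rintro ⟨y, b⟩
    simp only [hpre, List.mem_append, List.mem_map]
    constructor
    · rintro (⟨y', hy', he⟩ | ⟨y', hy', he⟩)
      · obtain ⟨rfl, rfl⟩ := Prod.mk.inj he
        exact Or.inl ⟨((hBsmem _).1 hy').1, ((hBsmem _).1 hy').2, rfl⟩
      · obtain ⟨rfl, rfl⟩ := Prod.mk.inj he
        exact Or.inr ⟨((hDsmem _).1 hy').1, ((hDsmem _).1 hy').2, rfl⟩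
    · rintro (⟨h1, h2, rfl⟩ | ⟨h1, h2, rfl⟩)
      · exact Or.inl ⟨y, (hBsmem y).2 ⟨h1, h2⟩, rfl⟩
      · exact Or.inr ⟨y, (hDsmem y).2 ⟨h1, h2⟩, rfl⟩
  have hatomsfree : atomsOf L ⊆ P.atoms \ (T ∪ F) := by
    intro y hy
    obtain ⟨b, hb⟩ := mem_atomsOf.1 hy
    rcases (hmemL _).1 hb with h | h
    · rcases (hmempre _).1 h with ⟨h1, h2, -⟩ | ⟨h1, h2, -⟩
      · exact Finset.mem_sdiff.2 ⟨clause_atoms_subset hc (by simp [LPClause.atoms, h1]), h2⟩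
      · exact Finset.mem_sdiff.2 ⟨clause_atoms_subset hc (by simp [LPClause.atoms, h1]), h2⟩
    · cases h; exact Finset.mem_sdiff.2 ⟨hxat, hxTF⟩
  have hcardL : (atomsOf L).card = k := atomsOf_card hnodup
  have hkfree : k ≤ (P.atoms \ (T ∪ F)).card := by
    rw [← hcardL]; exact Finset.card_le_card hatomsfree
  have hkf : k ≤ f := le_trans hkfree hfree
  have hkt : k ≤ t := by
    have hlB : Bs.length = (c.pos \ (T ∪ F)).card := by rw [hBs, Finset.length_toList]
    have hlD : Ds.length = (c.neg \ (T ∪ F)).card := by rw [hDs, Finset.length_toList]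
    have h1 : (c.pos \ (T ∪ F)).card ≤ c.pos.card := Finset.card_le_card (Finset.sdiff_subset)
    have h2 : (c.neg \ (T ∪ F)).card ≤ c.neg.card := Finset.card_le_card (Finset.sdiff_subset)
    have := hP c hc
    rw [hhead] at this
    simp only [Option.elim] at this
    omega
  -- class definitions
  set ent : ℕ → α × Bool := fun j => L.getD j (x, true) with hent
  set Lj : ℕ → List (α × Bool) := fun j =>
    if j = k - 1 then L else L.take j ++ [((ent j).1, !(ent j).2)] with hLj
  have hatomsLj : ∀ j < k, atomsOf (Lj j) = atomsOf (L.take (j + 1)) := by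
    intro j hj
    by_cases hjk : j = k - 1
    · subst hjk
      have htk : L.take (k - 1 + 1) = L := List.take_of_length_le (by omega)
      simp only [hLj, if_pos rfl]
      rw [htk]
    · have htk : L.take (j+1) = L.take j ++ [ent j] := by
        have hjlen : j < L.length := by omega
        simp only [hent]
        have h2 := List.take_concat_get hjlen
        rw [← h2, List.concat_eq_append]
        congr 1
        simp [List.getElem?_eq_getElem hjlen]
      simp only [hLj, if_neg hjk]
      rw [htk, atomsOf_append, atomsOf_append]
      have he : atomsOf [((ent j).1, !(ent j).2)] = atomsOf [ent j] := by
        ext y; simp [atomsOf]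
      rw [he]
  have hcardLj : ∀ j < k, (atomsOf (Lj j)).card = j + 1 := by
    intro j hj
    rw [hatomsLj j hj]
    have hnd : ((L.take (j+1)).map Prod.fst).Nodup := by
      rw [List.map_take]
      exact (List.take_sublist _ _).nodup hnodup
    rw [atomsOf_card hnd, List.length_take]
    omega
  -- covering
  have hpretake : L.take (k - 1) = pre := by
    have : k - 1 = pre.length := by
      simp only [hklen, hpre]; simp
    rw [this, hL, List.take_left]
  have cover : ∀ M ∈ SMF P T F, ∃ j ∈ Finset.range k,
      M ∈ SMF P (T ∪ trueOf (Lj j)) (F ∪ falseOf (Lj j)) := by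
    intro M hM
    obtain ⟨hMst, hTM, hFM⟩ := mem_SMF.1 hM
    have hfire : (∀ p ∈ L.take (k - 1), ((p.1 ∈ M) ↔ p.2 = true)) → x ∈ M := by
      intro hagree
      rw [hpretake] at hagree
      have hposM : c.pos ⊆ M := by
        intro b hb
        by_cases hbTF : b ∈ T ∪ F
        · exact hTM (hposfix b hb hbTF)
        · exact (hagree (b, true) ((hmempre _).2 (Or.inl ⟨hb, hbTF, rfl⟩))).2 rfl
      have hnegM : ∀ b ∈ c.neg, b ∉ M := by
        intro b hb
        by_cases hbTF : b ∈ T ∪ F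
        · exact hFM b (hnegfix b hb hbTF)
        · intro hbM
          have := (hagree (b, false) ((hmempre _).2 (Or.inr ⟨hb, hbTF, rfl⟩))).1 hbM
          simp at this
      exact hMst.1 c hc x hhead hnegM (by exact_mod_cast Finset.coe_subset.2 hposM)
    by_cases hex : ∃ j, j < k - 1 ∧ ¬((ent j).1 ∈ M ↔ (ent j).2 = true)
    · set j := Nat.find hex with hj
      obtain ⟨hjlt, hjdis⟩ := Nat.find_spec hex
      have hmin : ∀ i < j, i < k - 1 → ((ent i).1 ∈ M ↔ (ent i).2 = true) := by
        intro i hi hik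
        by_contra hcon
        exact Nat.find_min hex hi ⟨hik, hcon⟩
      have hjk : j < k := by omega
      have hjne : j ≠ k - 1 := by omega
      refine ⟨j, Finset.mem_range.2 hjk, mem_SMF.2 ⟨hMst, ?_, ?_⟩⟩
      · intro y hy
        rcases Finset.mem_union.1 hy with hy | hy
        · exact hTM hy
        · have hyL : (y, true) ∈ Lj j := mem_trueOf.1 hy
          simp only [hLj, if_neg hjne, List.mem_append, List.mem_singleton] at hyL
          rcases hyL with hyL | hyL
          · obtain ⟨i, hij, hil, hig⟩ := mem_take_exists_getD (x, true) hyL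
            have hiag := hmin i hij (by omega)
            simp only [hent] at hiag
            rw [hig] at hiag
            exact hiag.2 rfl
          · obtain ⟨hy1, hy2⟩ := Prod.mk.inj hyL
            have hv : (ent j).2 = false := by
              cases h : (ent j).2
              · rfl
              · rw [h] at hy2; simp at hy2
            by_contra hyM
            exact hjdis (by rw [← hy1, hv]; simp [hyM])
      · intro b hb
        rcases Finset.mem_union.1 hb with hb | hb
        · exact hFM b hb
        · have hbL : (b, false) ∈ Lj j := mem_falseOf.1 hb
          simp only [hLj, if_neg hjne, List.mem_append, List.mem_singleton] at hbL
          rcases hbL with hbL | hbL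
          · obtain ⟨i, hij, hil, hig⟩ := mem_take_exists_getD (x, true) hbL
            have hiag := hmin i hij (by omega)
            simp only [hent] at hiag
            rw [hig] at hiag
            intro hbM
            exact Bool.false_ne_true (hiag.1 hbM)
          · obtain ⟨hb1, hb2⟩ := Prod.mk.inj hbL
            have hv : (ent j).2 = true := by
              cases h : (ent j).2
              · rw [h] at hb2; simp at hb2
              · rfl
            intro hbM
            exact hjdis (by rw [← hb1, hv]; simp [hbM])
    · push_neg at hex
      have hagree : ∀ p ∈ L.take (k - 1), ((p.1 ∈ M) ↔ p.2 = true) := by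
        intro p hp
        obtain ⟨i, hij, hil, hig⟩ := mem_take_exists_getD (x, true) hp
        have hiag := hex i hij
        simp only [hent] at hiag
        rw [hig] at hiag
        exact hiag
      have hxM : x ∈ M := hfire hagree
      have hallL : ∀ p ∈ L, ((p.1 ∈ M) ↔ p.2 = true) := by
        intro p hp
        rcases (hmemL p).1 hp with h | h
        · rw [← hpretake] at h; exact hagree p h
        · subst h; simp [hxM]
      refine ⟨k - 1, Finset.mem_range.2 (by omega), mem_SMF.2 ⟨hMst, ?_, ?_⟩⟩
      · intro y hy
        rcases Finset.mem_union.1 hy with hy | hy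
        · exact hTM hy
        · have hm : (y, true) ∈ Lj (k-1) := mem_trueOf.1 hy
          simp only [hLj, if_pos rfl] at hm
          exact (hallL _ hm).2 rfl
      · intro b hb
        rcases Finset.mem_union.1 hb with hb | hb
        · exact hFM b hb
        · have hm : (b, false) ∈ Lj (k-1) := mem_falseOf.1 hb
          simp only [hLj, if_pos rfl] at hm
          intro hbM
          exact Bool.false_ne_true ((hallL _ hm).1 hbM)
  -- from covering to the card bound
  have hsub : SMF P T F ⊆ (Finset.range k).biUnion
      (fun j => SMF P (T ∪ trueOf (Lj j)) (F ∪ falseOf (Lj j))) := by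
    intro M hM
    obtain ⟨j, hj, hMj⟩ := cover M hM
    exact Finset.mem_biUnion.2 ⟨j, hj, hMj⟩
  have hcard : (SMF P T F).card ≤
      ∑ j ∈ Finset.range k, (SMF P (T ∪ trueOf (Lj j)) (F ∪ falseOf (Lj j))).card :=
    le_trans (Finset.card_le_card hsub) (Finset.card_biUnion_le)
  have hclass : ∀ j ∈ Finset.range k,
      ((SMF P (T ∪ trueOf (Lj j)) (F ∪ falseOf (Lj j))).card : ℝ) ≤ a ^ (f - (j+1)) := by
    intro j hj
    rw [Finset.mem_range] at hj
    apply ih (f - (j+1)) (by omega)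
    have hunion : (T ∪ trueOf (Lj j)) ∪ (F ∪ falseOf (Lj j)) =
        (T ∪ F) ∪ atomsOf (Lj j) := by
      rw [← trueOf_union_falseOf]
      ext y
      simp only [Finset.mem_union]
      tauto
    rw [hunion]
    have hsdiff : P.atoms \ ((T ∪ F) ∪ atomsOf (Lj j)) =
        (P.atoms \ (T ∪ F)) \ atomsOf (Lj j) := by
      ext y; simp only [Finset.mem_sdiff, Finset.mem_union]; tauto
    rw [hsdiff]
    have hsubfree : atomsOf (Lj j) ⊆ P.atoms \ (T ∪ F) := by
      rw [hatomsLj j hj]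
      exact le_trans (atomsOf_take_subset L (j+1)) hatomsfree
    rw [Finset.card_sdiff_of_subset hsubfree, hcardLj j hj]
    omega
  calc ((SMF P T F).card : ℝ)
      ≤ ∑ j ∈ Finset.range k, ((SMF P (T ∪ trueOf (Lj j)) (F ∪ falseOf (Lj j))).card : ℝ) := by
        exact_mod_cast hcard
    _ ≤ ∑ j ∈ Finset.range k, a ^ (f - (j+1)) := Finset.sum_le_sum hclass
    _ = ∑ i ∈ Finset.range k, a ^ (f - k + i) := by
        rw [← Finset.sum_range_reflect (fun i => a ^ (f - k + i)) k]
        apply Finset.sum_congr rfl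
        intro j hj
        rw [Finset.mem_range] at hj
        congr 1
        omega
    _ ≤ a ^ f := hsum f k hk1 hkt hkf

end Key

lemma key (t : ℕ) (a : ℝ) (ha : 1 < a)
    (hsum : ∀ n k : ℕ, 1 ≤ k → k ≤ t → k ≤ n → ∑ i ∈ Finset.range k, a ^ (n - k + i) ≤ a ^ n) :
    ∀ f : ℕ, ∀ {α : Type} [DecidableEq α] (P : LPProgram α) (T F : Finset α),
      IsTProgram P t → (P.atoms \ (T ∪ F)).card ≤ f →
      ((SMF P T F).card : ℝ) ≤ a ^ f := by
  intro f
  induction f using Nat.strong_induction_on with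
  | _ f ih =>
    intro α _ P T F hP hfree
    by_cases h1 : (SMF P T F).card ≤ 1
    · calc ((SMF P T F).card : ℝ) ≤ 1 := by exact_mod_cast h1
        _ ≤ a ^ f := one_le_pow₀ ha.le
    · push_neg at h1
      obtain ⟨A, hA, B, hB, hne⟩ := Finset.one_lt_card.1 h1
      have hx : ∃ x, (x ∈ A ∧ x ∉ B) ∨ (x ∈ B ∧ x ∉ A) := by
        by_contra hcon
        push_neg at hcon
        apply hne
        ext y
        exact ⟨fun hy => (hcon y).1 hy, fun hy => (hcon y).2 hy⟩
      have ih' : ∀ m, m < f → ∀ T' F' : Finset α, (P.atoms \ (T' ∪ F')).card ≤ m →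
          ((SMF P T' F').card : ℝ) ≤ a ^ m := fun m hm T' F' h => ih m hm P T' F' hP h
      obtain ⟨x, hx | hx⟩ := hx
      · exact key_step t a ha hsum P hP f T F hfree ih' A B hA hB x hx.1 hx.2
      · exact key_step t a ha hsum P hP f T F hfree ih' B A hB hA x hx.1 hx.2


/-- For every `t ≥ 2` there is a constant `C > 0` such that every `t`-program
has at most `C * a ^ n` stable models, where `n` is the number of its atoms and
`a = α_t` is the largest real root of `x^t = x^(t-1) + ⋯ + x + 1`. -/
theorem stmt_9 (t : ℕ) (ht : 2 ≤ t) (a : ℝ)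
    (ha_root : a ^ t = ∑ i ∈ Finset.range t, a ^ i)
    (ha_max : ∀ x : ℝ, x ^ t = ∑ i ∈ Finset.range t, x ^ i → x ≤ a) :
    ∃ C : ℝ, 0 < C ∧ ∀ (α : Type) [DecidableEq α] (P : LPProgram α),
      IsTProgram P t →
      ({M : Finset α | IsStable P M}.ncard : ℝ) ≤ C * a ^ P.atoms.card := by
  have ha : 1 < a := rootA t ht a ha_root ha_max
  have hsum := rootC t a ha ha_root
  refine ⟨1, one_pos, ?_⟩
  intro α _ P hP
  have hset : {M : Finset α | IsStable P M} = ↑(SMF P ∅ ∅) := by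
    ext M
    simp only [Set.mem_setOf_eq, Finset.coe_filter, Finset.mem_coe, mem_SMF]
    constructor
    · intro h; exact ⟨h, Finset.empty_subset M, by simp⟩
    · intro h; exact h.1
  rw [hset, Set.ncard_coe_finset, one_mul]
  exact key t a ha hsum P.atoms.card P ∅ ∅ hP (by simp)
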